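/- For every nonempty word a over {0,1}, the set P_a = {code(aⁿ) ++ 0010 : n ≥ 1} is a prefix code, and no element of P_a contains 11 (two consecutive 1s) as a factor (contiguous subword, i.e., infix). -/

import Mathlib

/-!
Every letter of `code w` at an even position is `0`, and `code w ++ 0010 = code (w ++ 0) ++ 10`.
Hence the first `1` at an even position of a word of `P_a` marks its end, so no word of `P_a`
is a proper prefix of another; and every `1` of such a word is followed by a `0`.
-/

def code (x : List Bool) : List Bool := x.flatMap (fun b => [false, b])

def IsPrefixCode (P : Set (List Bool)) : Prop :=
  ∀ p ∈ P, ∀ q ∈ P, p <+: q → p = q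

def Pa (a : List Bool) : Set (List Bool) :=
  {y | ∃ n : ℕ, 1 ≤ n ∧ y = code ((List.replicate n a).flatten) ++ [false, false, true, false]}

lemma code_nil : code [] = [] := rfl

lemma code_cons (b : Bool) (w : List Bool) : code (b :: w) = false :: b :: code w := rfl

lemma code_append (x y : List Bool) : code (x ++ y) = code x ++ code y := by
  simp [code]

lemma code_append_marker (w : List Bool) :
    code w ++ [false, false, true, false] = code (w ++ [false]) ++ [true, false] := by
  simp [code_append, code_cons, code_nil]

lemma eq_of_code_append_true_prefix {u v s t : List Bool}
    (h : code u ++ true :: s <+: code v ++ true :: t) : u = v := by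
  induction u generalizing v with
  | nil => cases v <;> simp_all [code_nil, code_cons, List.cons_prefix_cons]
  | cons b u ih =>
    cases v with
    | nil => simp [code_nil, code_cons, List.cons_prefix_cons] at h
    | cons c v =>
      simp only [code_cons, List.cons_append, List.cons_prefix_cons, true_and] at h
      rw [h.1, ih h.2]

lemma not_true_true_infix_code_append (w : List Bool) {s : List Bool}
    (hs : ¬ [true, true] <:+: false :: s) : ¬ [true, true] <:+: code w ++ false :: s := by
  induction w with
  | nil => exact hs
  | cons b w ih =>
    have head_false : ¬ [true] <+: code w ++ false :: s := by
      cases w <;> simp [code_nil, code_cons, List.cons_prefix_cons]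
    simp only [code_cons, List.cons_append, List.infix_cons_iff, List.cons_prefix_cons]
    tauto

theorem isPrefixCode_Pa (a : List Bool) : IsPrefixCode (Pa a) := by
  rintro _ ⟨n, -, rfl⟩ _ ⟨m, -, rfl⟩ h
  rw [code_append_marker, code_append_marker] at h ⊢
  rw [eq_of_code_append_true_prefix h]

theorem Pa_prefixCode_no11_general (a : List Bool) :
    IsPrefixCode (Pa a) ∧ ∀ y ∈ Pa a, ¬ [true, true] <:+: y := by
  refine ⟨isPrefixCode_Pa a, ?_⟩
  rintro _ ⟨n, -, rfl⟩
  exact not_true_true_infix_code_append _ (by decide)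

/-- For every nonempty word `a`, the set `P_a = {code(aⁿ) ++ 0010 : n ≥ 1}` is a
prefix code and no element of `P_a` contains `11` as a factor (infix). -/
theorem Pa_prefixCode_no11 (a : List Bool) (ha : a ≠ []) :
    IsPrefixCode (Pa a) ∧ ∀ y ∈ Pa a, ¬ [true, true] <:+: y :=
  Pa_prefixCode_no11_general a
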